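/- Let B ⊆ S be a target set in a finite DTMC and let D be the set of states that can reach B (the backward-reachable set of B). Then the system of linear equations x(s) = Σ_{t ∈ D} P(s,t)·x(t) + Σ_{u ∈ B} P(s,u) for s ∈ D, together with x(u) = 1 for u ∈ B, has a unique solution, and that solution equals the reachability probabilities Pr[◇B | s]. -/

import Mathlib

noncomputable section
attribute [local instance] Classical.propDecidable

variable {S : Type*}

/-- Probability of a finite path: product of transition probabilities. -/
def pathProb (P : S → S → ℝ) : List S → ℝ
  | [] => 1
  | [_] => 1
  | a :: b :: r => P a b * pathProb P (b :: r)

/-- A danger path from `s` into `B`: nonempty, starts at `s`, ends in `B`,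
all states except the last outside `B`. -/
def IsDangerPath (T : S → S → Prop) (B : Set S) (s : S) (l : List S) : Prop :=
  l.Chain' T ∧ ∃ h : l ≠ [], l.head h = s ∧ l.getLast h ∈ B ∧ ∀ x ∈ l.dropLast, x ∉ B

/-- Reachability in at most `n` steps. -/
def ReachN (T : S → S → Prop) : ℕ → S → S → Prop
  | 0, s, u => s = u
  | n + 1, s, u => s = u ∨ ∃ t, T s t ∧ ReachN T n t u

/-- States that can reach `X` within `j` steps. -/
def PreN (T : S → S → Prop) (X : Set S) (j : ℕ) : Set S :=
  {s | ∃ b ∈ X, ReachN T j s b}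

/-- States reachable from `I` within `i` steps. -/
def PostN (T : S → S → Prop) (I : Set S) (i : ℕ) : Set S :=
  {s | ∃ a ∈ I, ReachN T i a s}

/-- States that can reach `X` (backward reachable set). -/
def PreStar (T : S → S → Prop) (X : Set S) : Set S :=
  {s | ∃ b ∈ X, Relation.ReflTransGen T s b}

/-- States reachable from `I`. -/
def PostStar (T : S → S → Prop) (I : Set S) : Set S :=
  {s | ∃ a ∈ I, Relation.ReflTransGen T a s}

/-- The reachability (hitting) probability `Pr[◇B | s]`, characterized as the least
nonnegative solution of the standard fixed-point equations. -/
def hitProb [Fintype S] (P : S → S → ℝ) (B : Set S) (s : S) : ℝ :=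
  sInf {r : ℝ | ∃ x : S → ℝ, (∀ t, 0 ≤ x t) ∧ (∀ t ∈ B, x t = 1) ∧
    (∀ t ∉ B, x t = ∑ u, P t u * x u) ∧ r = x s}

/-- Solution of the linear system over `D = Pre*(B) \ B`. -/
def IsSol [Fintype S] (P : S → S → ℝ) (B D : Set S) (x : S → ℝ) : Prop :=
  (∀ u ∈ B, x u = 1) ∧
  ∀ s ∈ D, x s = (∑ t, if t ∈ D then P s t * x t else 0) + ∑ u, if u ∈ B then P s u else 0

/-!
`hitProbWithin P B k s`, the probability of reaching `B` from `s` within `k` steps, increases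
to the least nonnegative solution of the fixed-point equations, which is `hitProb`. It vanishes
outside `Pre*(B)`, so its limit restricts to a solution of the system over `D`.

Uniqueness is a maximum principle. For two solutions `x, y`, the function `w = |x - y|` on `D`,
extended by `0`, vanishes on `B` and satisfies `w ≤ P w` off `B`. With `M = max w`, the function
`M - w` is a nonnegative supersolution that is `≥ M` on `B`, hence dominates
`M • hitProbWithin P B k` by comparison. At a maximiser `t₀ ∈ D` some `hitProbWithin P B k t₀`
is positive because `t₀` reaches `B`, and this forces `M = 0`.
-/

open Filter Topology

def hitProbWithin [Fintype S] (P : S → S → ℝ) (B : Set S) : ℕ → S → ℝ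
  | 0 => fun s => if s ∈ B then 1 else 0
  | k + 1 => fun s => if s ∈ B then 1 else ∑ u, P s u * hitProbWithin P B k u

def hitProbLimit [Fintype S] (P : S → S → ℝ) (B : Set S) (s : S) : ℝ :=
  ⨆ k, hitProbWithin P B k s

section HitProbWithin

variable [Fintype S] {P : S → S → ℝ} {B : Set S} {s : S}

@[simp]
lemma hitProbWithin_of_mem (hs : s ∈ B) (k : ℕ) : hitProbWithin P B k s = 1 := by
  cases k <;> simp [hitProbWithin, hs]

lemma hitProbWithin_zero_of_notMem (hs : s ∉ B) : hitProbWithin P B 0 s = 0 := by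
  simp [hitProbWithin, hs]

lemma hitProbWithin_succ_of_notMem (hs : s ∉ B) (k : ℕ) :
    hitProbWithin P B (k + 1) s = ∑ u, P s u * hitProbWithin P B k u := by
  simp [hitProbWithin, hs]

variable (hnn : ∀ s t, 0 ≤ P s t)
include hnn

lemma hitProbWithin_nonneg (k : ℕ) (s : S) : 0 ≤ hitProbWithin P B k s := by
  induction k generalizing s with
  | zero => by_cases hs : s ∈ B <;> simp [hitProbWithin, hs]
  | succ k ih =>
    by_cases hs : s ∈ B
    · simp [hs]
    · rw [hitProbWithin_succ_of_notMem hs]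
      exact Finset.sum_nonneg fun u _ => mul_nonneg (hnn s u) (ih u)

lemma hitProbWithin_le_one (hrow : ∀ s, ∑ t, P s t = 1) (k : ℕ) (s : S) :
    hitProbWithin P B k s ≤ 1 := by
  induction k generalizing s with
  | zero => by_cases hs : s ∈ B <;> simp [hitProbWithin, hs]
  | succ k ih =>
    by_cases hs : s ∈ B
    · simp [hs]
    · calc hitProbWithin P B (k + 1) s = ∑ u, P s u * hitProbWithin P B k u :=
            hitProbWithin_succ_of_notMem hs k
        _ ≤ ∑ u, P s u := Finset.sum_le_sum fun u _ => mul_le_of_le_one_right (hnn s u) (ih u)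
        _ = 1 := hrow s

lemma monotone_hitProbWithin (s : S) : Monotone fun k => hitProbWithin P B k s := by
  refine monotone_nat_of_le_succ fun k => ?_
  induction k generalizing s with
  | zero =>
    by_cases hs : s ∈ B
    · simp [hs]
    · rw [hitProbWithin_zero_of_notMem hs]
      exact hitProbWithin_nonneg hnn 1 s
  | succ k ih =>
    by_cases hs : s ∈ B
    · simp [hs]
    · rw [hitProbWithin_succ_of_notMem hs, hitProbWithin_succ_of_notMem hs]
      exact Finset.sum_le_sum fun u _ => mul_le_mul_of_nonneg_left (ih u) (hnn s u)

lemma mul_hitProbWithin_le {z : S → ℝ} {c : ℝ} (hz : ∀ t, 0 ≤ z t) (hB : ∀ t ∈ B, c ≤ z t)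
    (hsuper : ∀ t ∉ B, ∑ u, P t u * z u ≤ z t) (k : ℕ) (s : S) :
    c * hitProbWithin P B k s ≤ z s := by
  induction k generalizing s with
  | zero => by_cases hs : s ∈ B <;> simp [hitProbWithin, hs, hB, hz]
  | succ k ih =>
    by_cases hs : s ∈ B
    · simpa [hs] using hB s hs
    · calc c * hitProbWithin P B (k + 1) s = ∑ u, P s u * (c * hitProbWithin P B k u) := by
            rw [hitProbWithin_succ_of_notMem hs, Finset.mul_sum]
            exact Finset.sum_congr rfl fun u _ => by ring
        _ ≤ ∑ u, P s u * z u :=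
          Finset.sum_le_sum fun u _ => mul_le_mul_of_nonneg_left (ih u) (hnn s u)
        _ ≤ z s := hsuper s hs

lemma hitProbWithin_eq_zero (hs : s ∉ PreStar (fun a b => 0 < P a b) B) (k : ℕ) :
    hitProbWithin P B k s = 0 := by
  induction k generalizing s with
  | zero => exact hitProbWithin_zero_of_notMem fun hsB => hs ⟨s, hsB, .refl⟩
  | succ k ih =>
    rw [hitProbWithin_succ_of_notMem fun hsB => hs ⟨s, hsB, .refl⟩]
    refine Finset.sum_eq_zero fun u _ => ?_
    rcases (hnn s u).lt_or_eq with hpos | hzero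
    · rw [ih fun ⟨b, hb, hub⟩ => hs ⟨b, hb, hub.head hpos⟩, mul_zero]
    · rw [← hzero, zero_mul]

lemma exists_hitProbWithin_pos (hs : s ∈ PreStar (fun a b => 0 < P a b) B) :
    ∃ k, 0 < hitProbWithin P B k s := by
  obtain ⟨b, hb, hsb⟩ := hs
  induction hsb using Relation.ReflTransGen.head_induction_on with
  | refl => exact ⟨0, by simp [hb]⟩
  | @head a c hac _ ih =>
    obtain ⟨k, hk⟩ := ih
    by_cases ha : a ∈ B
    · exact ⟨0, by simp [ha]⟩
    · refine ⟨k + 1, ?_⟩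
      rw [hitProbWithin_succ_of_notMem ha]
      exact (mul_pos hac hk).trans_le <| Finset.single_le_sum
        (fun u _ => mul_nonneg (hnn a u) (hitProbWithin_nonneg hnn k u)) (Finset.mem_univ c)

end HitProbWithin

section HitProbLimit

variable [Fintype S] {P : S → S → ℝ} {B : Set S} {s : S}

@[simp]
lemma hitProbLimit_of_mem (hs : s ∈ B) : hitProbLimit P B s = 1 := by
  simp [hitProbLimit, hs]

lemma hitProbLimit_eq_zero (hnn : ∀ s t, 0 ≤ P s t)
    (hs : s ∉ PreStar (fun a b => 0 < P a b) B) : hitProbLimit P B s = 0 := by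
  simp [hitProbLimit, hitProbWithin_eq_zero hnn hs]

variable (hnn : ∀ s t, 0 ≤ P s t) (hrow : ∀ s, ∑ t, P s t = 1)
include hnn hrow

lemma tendsto_hitProbWithin (s : S) :
    Tendsto (fun k => hitProbWithin P B k s) atTop (𝓝 (hitProbLimit P B s)) :=
  tendsto_atTop_ciSup (monotone_hitProbWithin hnn s)
    ⟨1, by rintro _ ⟨k, rfl⟩; exact hitProbWithin_le_one hnn hrow k s⟩

lemma hitProbLimit_nonneg (s : S) : 0 ≤ hitProbLimit P B s :=
  ge_of_tendsto' (tendsto_hitProbWithin hnn hrow s) (hitProbWithin_nonneg hnn · s)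

lemma hitProbLimit_eq_sum (hs : s ∉ B) :
    hitProbLimit P B s = ∑ u, P s u * hitProbLimit P B u := by
  refine tendsto_nhds_unique ((tendsto_add_atTop_iff_nat 1).2 (tendsto_hitProbWithin hnn hrow s)) ?_
  simp_rw [hitProbWithin_succ_of_notMem hs]
  exact tendsto_finsetSum _ fun u _ => (tendsto_hitProbWithin hnn hrow u).const_mul _

lemma hitProb_eq_hitProbLimit (s : S) : hitProb P B s = hitProbLimit P B s := by
  refine IsLeast.csInf_eq ⟨⟨hitProbLimit P B, hitProbLimit_nonneg hnn hrow,
    fun t ht => hitProbLimit_of_mem ht, fun t ht => hitProbLimit_eq_sum hnn hrow ht, rfl⟩, ?_⟩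
  rintro _ ⟨x, hx0, hxB, hxeq, rfl⟩
  refine ciSup_le fun k => ?_
  simpa using mul_hitProbWithin_le hnn (c := 1) hx0 (fun t ht => (hxB t ht).ge)
    (fun t ht => (hxeq t ht).ge) k s

lemma nonpos_of_le_sum {w : S → ℝ} (hB : ∀ t ∈ B, w t = 0)
    (hout : ∀ t ∉ PreStar (fun a b => 0 < P a b) B, w t = 0)
    (hsub : ∀ t ∉ B, w t ≤ ∑ u, P t u * w u) (s : S) : w s ≤ 0 := by
  have : Nonempty S := ⟨s⟩
  obtain ⟨t₀, hmax⟩ := Finite.exists_max w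
  have hdom := mul_hitProbWithin_le hnn (z := fun t => w t₀ - w t) (c := w t₀)
    (fun t => sub_nonneg.2 (hmax t)) (fun t ht => by simp [hB t ht]) fun t ht => by
      simp only [mul_sub, Finset.sum_sub_distrib, ← Finset.sum_mul, hrow, one_mul]
      linarith [hsub t ht]
  suffices w t₀ ≤ 0 from (hmax s).trans this
  by_cases ht₀ : t₀ ∈ PreStar (fun a b => 0 < P a b) B
  · obtain ⟨k, hk⟩ := exists_hitProbWithin_pos hnn ht₀
    have := hdom k t₀
    rw [sub_self] at this
    exact nonpos_of_mul_nonpos_left this hk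
  · exact (hout t₀ ht₀).le

end HitProbLimit

section LinearSystem

variable [Fintype S] {P : S → S → ℝ} {B : Set S}
variable (hnn : ∀ s t, 0 ≤ P s t) (hrow : ∀ s, ∑ t, P s t = 1)
include hnn hrow

lemma isSol_hitProbLimit :
    IsSol P B (PreStar (fun a b => 0 < P a b) B \ B) (hitProbLimit P B) := by
  refine ⟨fun u hu => hitProbLimit_of_mem hu, fun s hs => ?_⟩
  rw [hitProbLimit_eq_sum hnn hrow hs.2, ← Finset.sum_add_distrib]
  refine Finset.sum_congr rfl fun u _ => ?_
  by_cases huD : u ∈ PreStar (fun a b => 0 < P a b) B \ B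
  · simp [huD, huD.2]
  · by_cases huB : u ∈ B
    · simp [huD, huB]
    · simp [huD, huB, hitProbLimit_eq_zero hnn fun h => huD ⟨h, huB⟩]

lemma IsSol.eqOn {x y : S → ℝ} (hx : IsSol P B (PreStar (fun a b => 0 < P a b) B \ B) x)
    (hy : IsSol P B (PreStar (fun a b => 0 < P a b) B \ B) y) :
    Set.EqOn x y (PreStar (fun a b => 0 < P a b) B \ B ∪ B) := by
  set D := PreStar (fun a b => 0 < P a b) B \ B
  have hdiff : ∀ s ∈ D, x s - y s = ∑ t, if t ∈ D then P s t * (x t - y t) else 0 := by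
    intro s hs
    rw [hx.2 s hs, hy.2 s hs, add_sub_add_right_eq_sub, ← Finset.sum_sub_distrib]
    exact Finset.sum_congr rfl fun t _ => by split_ifs <;> ring
  let w : S → ℝ := fun t => if t ∈ D then |x t - y t| else 0
  have hw0 : ∀ t, 0 ≤ w t := fun t => by by_cases ht : t ∈ D <;> simp [w, ht]
  have hsub : ∀ t ∉ B, w t ≤ ∑ u, P t u * w u := by
    intro t htB
    by_cases ht : t ∈ D
    · calc w t = |∑ u, if u ∈ D then P t u * (x u - y u) else 0| := by simp [w, ht, hdiff t ht]
        _ ≤ ∑ u, |if u ∈ D then P t u * (x u - y u) else 0| := Finset.abs_sum_le_sum_abs _ _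
        _ = ∑ u, P t u * w u := Finset.sum_congr rfl fun u _ => by
            by_cases hu : u ∈ D <;> simp [w, hu, abs_mul, abs_of_nonneg (hnn t u)]
    · simpa [w, ht] using Finset.sum_nonneg fun u _ => mul_nonneg (hnn t u) (hw0 u)
  have hw : ∀ s, w s ≤ 0 := nonpos_of_le_sum hnn hrow (fun t ht => by simp [w, D, ht])
    (fun t ht => by simp [w, D, ht]) hsub
  rintro s (hs | hs)
  · simpa [w, hs, sub_eq_zero] using hw s
  · rw [hx.1 s hs, hy.1 s hs]

end LinearSystem

/-- the linear system over the backward-reachable set has a unique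
solution, which equals the reachability probabilities. -/
theorem stmt2 [Fintype S] (P : S → S → ℝ)
    (hnn : ∀ s t, 0 ≤ P s t) (hrow : ∀ s, ∑ t, P s t = 1) (B : Set S) :
    let T : S → S → Prop := fun a b => 0 < P a b
    let D : Set S := PreStar T B \ B
    (∃ x : S → ℝ, IsSol P B D x) ∧
    (∀ x y : S → ℝ, IsSol P B D x → IsSol P B D y → ∀ s ∈ D ∪ B, x s = y s) ∧
    (∀ x : S → ℝ, IsSol P B D x → ∀ s ∈ D ∪ B, x s = hitProb P B s) := by
  intro T D
  have hsol : IsSol P B D (hitProbLimit P B) := isSol_hitProbLimit hnn hrow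
  refine ⟨⟨_, hsol⟩, fun x y hx hy => hx.eqOn hnn hrow hy, fun x hx s hs => ?_⟩
  rw [hx.eqOn hnn hrow hsol hs, hitProb_eq_hitProbLimit hnn hrow]
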